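/- Let μ be a compactly supported probability measure on ℝ with λ_max = sup(supp μ). Assume s_* = lim_{z↓λ_max} S_μ(z) is finite (equivalently ∫ μ(dλ)/(λ_max − λ) < ∞) and that ∫ |log(λ_max − λ)| μ(dλ) < ∞. Let σ > 0 and β > 0 satisfy βσ² > −s_*. Then inf_{γ > βλ_max} [ γσ² − ∫ μ(dλ) log(γ − βλ) ] = β λ_max σ² − log β − ∫ μ(dλ) log(λ_max − λ), and this infimum is not attained in (βλ_max, ∞). -/

import Mathlib

/-!
After the substitution `γ = β z`, the objective becomes
`φ(z) = β σ² z - log β - ∫ log (z - λ) μ(dλ)` on `z > λ_max`. Since `log` is concave, the right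
slope of `φ` at `z` is at least `β σ² + S_μ(z) ≥ β σ² + s_* > 0`, so `φ` is strictly increasing.
As `z ↓ λ_max`, dominated convergence (with the integrable majorant `|log (λ_max - λ)|`) gives
`φ(z) → φ(λ_max)`, which is therefore the infimum and is not attained. The dominated convergence
needs `μ {λ_max} = 0`, and this is where `s_* > -∞` enters: an atom of mass `p` at `λ_max` would
force `S_μ(z) ≤ p / (λ_max - z) → -∞`.
-/

open MeasureTheory Filter Topology

noncomputable section

/-- The supremum of the support of a (compactly supported) measure on `ℝ`:
`λ_max = sup(supp μ)`. -/
def suppMax (μ : Measure ℝ) : ℝ := sInf {r : ℝ | μ (Set.Ioi r) = 0}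

/-- The Stieltjes transform `S_μ(z) = ∫ μ(dλ)/(λ − z)`. -/
def stieltjesT (μ : Measure ℝ) (z : ℝ) : ℝ := ∫ l, (l - z)⁻¹ ∂μ

/-- `s_* = lim_{z↓λ_max} S_μ(z) ∈ [−∞, 0)`, realized (using monotonicity of `S_μ`) as the
infimum of `S_μ` over `(λ_max, ∞)`, viewed in the extended reals. -/
def sStarE (μ : Measure ℝ) : EReal :=
  ⨅ z ∈ Set.Ioi (suppMax μ), ((stieltjesT μ z : ℝ) : EReal)

/-- The `R`-transform `R_μ(z) = S_μ^{-1}(−z) − 1/z`, where `S_μ^{-1}` is the inverse of the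
restriction of the Stieltjes transform to `(λ_max, ∞)`. -/
def Rtransform (μ : Measure ℝ) (z : ℝ) : ℝ :=
  Function.invFunOn (stieltjesT μ) (Set.Ioi (suppMax μ)) (-z) - 1 / z

open Set Real

theorem StrictMonoOn.lt_of_tendsto_nhdsGT {α β : Type*} [LinearOrder α] [TopologicalSpace α]
    [OrderTopology α] [DenselyOrdered α] [LinearOrder β] [TopologicalSpace β]
    [OrderClosedTopology β] {φ : α → β} {a z : α} {c : β} (hφ : StrictMonoOn φ (Ioi a))
    (hlim : Tendsto φ (𝓝[>] a) (𝓝 c)) (hz : a < z) : c < φ z := by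
  obtain ⟨w, haw, hwz⟩ := exists_between hz
  have : (𝓝[>] a).NeBot := nhdsGT_neBot_of_exists_gt ⟨z, hz⟩
  have hcw : c ≤ φ w := le_of_tendsto hlim <| by
    filter_upwards [Ioo_mem_nhdsGT haw] with v hv
    exact hφ.le_iff_le hv.1 haw |>.2 hv.2.le
  exact hcw.trans_lt (hφ haw hz hwz)

lemma setOf_exists_mul_lt_eq_image_Ioi {F φ : ℝ → ℝ} {a β : ℝ} (hβ : 0 < β)
    (hF : ∀ γ, β * a < γ → F γ = φ (γ / β)) :
    {y : ℝ | ∃ γ : ℝ, β * a < γ ∧ y = F γ} = φ '' Ioi a := by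
  ext y
  constructor
  · rintro ⟨γ, hγ, rfl⟩
    exact ⟨γ / β, (lt_div_iff₀' hβ).2 hγ, (hF γ hγ).symm⟩
  · rintro ⟨z, hz, rfl⟩
    refine ⟨β * z, mul_lt_mul_of_pos_left hz hβ, ?_⟩
    rw [hF _ (mul_lt_mul_of_pos_left hz hβ), mul_div_cancel_left₀ _ hβ.ne']

lemma log_sub_log_le_div {x y : ℝ} (hx : 0 < x) (hxy : x ≤ y) : log y - log x ≤ (y - x) / x := by
  rw [← log_div (by linarith) hx.ne', sub_div, div_self hx.ne']
  exact log_le_sub_one_of_pos (div_pos (by linarith) hx)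

lemma ae_le_iff_measure_Ioi_eq_zero {μ : Measure ℝ} {r : ℝ} :
    (∀ᵐ l ∂μ, l ≤ r) ↔ μ (Ioi r) = 0 := by
  simp only [ae_iff, not_le]
  rfl

lemma exists_ae_mem_Icc_suppMax {μ : Measure ℝ} [NeZero μ]
    (hcomp : ∃ K : Set ℝ, IsCompact K ∧ μ Kᶜ = 0) :
    ∃ m, ∀ᵐ l ∂μ, l ∈ Icc m (suppMax μ) := by
  obtain ⟨K, hK, hKc⟩ := hcomp
  have hmemK : ∀ᵐ l ∂μ, l ∈ K := ae_iff.2 hKc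
  have hlow : ∀ᵐ l ∂μ, sInf K ≤ l := hmemK.mono fun l hl => csInf_le hK.bddBelow hl
  set R := {r : ℝ | μ (Ioi r) = 0}
  have hRne : R.Nonempty := ⟨sSup K, ae_le_iff_measure_Ioi_eq_zero.1 <|
    hmemK.mono fun l hl => le_csSup hK.bddAbove hl⟩
  have hRbdd : BddBelow R := by
    refine ⟨sInf K, fun r hr => not_lt.1 fun hrK => NeZero.ne μ ?_⟩
    rw [← ae_eq_bot, ← eventually_false_iff_eq_bot]
    filter_upwards [hlow, ae_le_iff_measure_Ioi_eq_zero.2 hr] with l h₁ h₂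
    linarith
  refine ⟨sInf K, hlow.and ?_⟩
  have hrat : ∀ᵐ l ∂μ, ∀ q : ℚ, suppMax μ < q → l ≤ (q : ℝ) := by
    refine ae_all_iff.2 fun q : ℚ => ?_
    by_cases hq : suppMax μ < q
    · obtain ⟨r, hrR, hrq⟩ := (csInf_lt_iff hRbdd hRne).1 hq
      filter_upwards [ae_le_iff_measure_Ioi_eq_zero.2 hrR] with l hl _
      linarith
    · exact Eventually.of_forall fun _ h => absurd h hq
  exact hrat.mono fun l hl => le_of_forall_lt_rat_imp_le hl

lemma lt_stieltjesT_of_neg_sStarE_lt {μ : Measure ℝ} {κ z : ℝ}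
    (hκ : -sStarE μ < (κ : EReal)) (hz : suppMax μ < z) : -κ < stieltjesT μ z := by
  have hle : sStarE μ ≤ (stieltjesT μ z : EReal) := biInf_le _ hz
  have hneg : ((-stieltjesT μ z : ℝ) : EReal) < κ := by
    rw [EReal.coe_neg]
    exact (EReal.neg_le_neg_iff.2 hle).trans_lt hκ
  linarith [EReal.coe_lt_coe_iff.1 hneg]

def logPotential (μ : Measure ℝ) (z : ℝ) : ℝ := ∫ l, log (z - l) ∂μ

section AeBounded

variable {μ : Measure ℝ} [IsFiniteMeasure μ] {a m : ℝ}

lemma integrable_inv_sub_of_ae_le (hle : ∀ᵐ l ∂μ, l ≤ a) {z : ℝ} (hz : a < z) :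
    Integrable (fun l => (l - z)⁻¹) μ := by
  refine .of_mem_Icc (a - z)⁻¹ 0 (by fun_prop) ?_
  filter_upwards [hle] with l hl
  exact ⟨(inv_le_inv_of_neg (by linarith) (by linarith)).2 (by linarith),
    inv_nonpos.2 (by linarith)⟩

lemma stieltjesT_le_measureReal_singleton_mul (hle : ∀ᵐ l ∂μ, l ≤ a) {z : ℝ} (hz : a < z) :
    stieltjesT μ z ≤ μ.real {a} * (a - z)⁻¹ := by
  rw [← smul_eq_mul, ← integral_indicator_const _ (measurableSet_singleton a)]
  refine integral_mono_ae (integrable_inv_sub_of_ae_le hle hz)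
    ((integrable_const _).indicator (measurableSet_singleton a)) ?_
  filter_upwards [hle] with l hl
  rcases hl.lt_or_eq with hla | rfl
  · rw [Set.indicator_of_notMem (show l ∉ ({a} : Set ℝ) from hla.ne)]
    exact inv_nonpos.2 (by linarith)
  · rw [Set.indicator_of_mem (mem_singleton l)]

lemma measure_singleton_eq_zero_of_bddBelow_stieltjesT (hle : ∀ᵐ l ∂μ, l ≤ a) {C : ℝ}
    (hC : ∀ z, a < z → C ≤ stieltjesT μ z) : μ {a} = 0 := by
  have hbound : ∀ z, a < z → μ.real {a} ≤ C * (a - z) := fun z hz => by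
    have := (hC z hz).trans (stieltjesT_le_measureReal_singleton_mul hle hz)
    rwa [← div_eq_mul_inv, le_div_iff_of_neg (by linarith)] at this
  have hlim : Tendsto (fun z => C * (a - z)) (𝓝[>] a) (𝓝 0) := by
    rw [show (0 : ℝ) = C * (a - a) by ring]
    exact (Continuous.tendsto (by fun_prop) a).mono_left nhdsWithin_le_nhds
  have hp : μ.real {a} ≤ 0 := ge_of_tendsto hlim (eventually_nhdsWithin_of_forall hbound)
  exact (measureReal_eq_zero_iff).1 (le_antisymm hp measureReal_nonneg)

lemma integrable_log_sub (hμ : ∀ᵐ l ∂μ, l ∈ Icc m a) {z : ℝ} (hz : a < z) :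
    Integrable (fun l => log (z - l)) μ := by
  refine .of_mem_Icc (log (z - a)) (log (z - m)) (by fun_prop) ?_
  filter_upwards [hμ] with l hl
  exact ⟨log_le_log (by linarith) (by linarith [hl.2]),
    log_le_log (by linarith [hl.2]) (by linarith [hl.1])⟩

/-- Tangent-line bound: `logPotential μ` is concave with derivative `-S_μ`. -/
lemma logPotential_sub_le (hμ : ∀ᵐ l ∂μ, l ∈ Icc m a) {z₁ z₂ : ℝ} (hz₁ : a < z₁)
    (hz : z₁ ≤ z₂) :
    logPotential μ z₂ - logPotential μ z₁ ≤ (z₂ - z₁) * -stieltjesT μ z₁ := by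
  have hle : ∀ᵐ l ∂μ, l ≤ a := hμ.mono fun _ hl => hl.2
  rw [logPotential, logPotential, stieltjesT, ← integral_sub (integrable_log_sub hμ (by linarith))
    (integrable_log_sub hμ hz₁), ← integral_neg, ← integral_const_mul]
  refine integral_mono_ae ((integrable_log_sub hμ (by linarith)).sub (integrable_log_sub hμ hz₁))
    ((integrable_inv_sub_of_ae_le hle hz₁).neg.const_mul _) ?_
  filter_upwards [hle] with l hl
  calc log (z₂ - l) - log (z₁ - l) ≤ ((z₂ - l) - (z₁ - l)) / (z₁ - l) :=
        log_sub_log_le_div (by linarith) (by linarith)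
    _ = (z₂ - z₁) * -(l - z₁)⁻¹ := by rw [← inv_neg, neg_sub, div_eq_mul_inv]; ring

lemma strictMonoOn_mul_sub_logPotential (hμ : ∀ᵐ l ∂μ, l ∈ Icc m a) {κ : ℝ}
    (hS : ∀ z, a < z → -κ < stieltjesT μ z) :
    StrictMonoOn (fun z => κ * z - logPotential μ z) (Ioi a) := by
  intro z₁ hz₁ z₂ _ hz
  have hdiff := logPotential_sub_le hμ hz₁ hz.le
  have hslope : (z₂ - z₁) * -stieltjesT μ z₁ < (z₂ - z₁) * κ :=
    mul_lt_mul_of_pos_left (by linarith [hS z₁ hz₁]) (by linarith)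
  dsimp only
  linarith

lemma tendsto_logPotential_nhdsGT (hμ : ∀ᵐ l ∂μ, l ∈ Icc m a) (hatom : μ {a} = 0)
    (hlog : Integrable (fun l => log (a - l)) μ) :
    Tendsto (logPotential μ) (𝓝[>] a) (𝓝 (logPotential μ a)) := by
  have hlt : ∀ᵐ l ∂μ, l < a := by
    filter_upwards [hμ, measure_eq_zero_iff_ae_notMem.1 hatom] with l hl hla
    exact lt_of_le_of_ne hl.2 hla
  refine tendsto_integral_filter_of_dominated_convergence
    (fun l => |log (a - l)| + |log (a + 1 - l)|)
    (Eventually.of_forall fun _ => (by fun_prop : AEMeasurable _ μ).aestronglyMeasurable) ?_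
    (hlog.abs.add (integrable_log_sub hμ (lt_add_one a)).abs) ?_
  · filter_upwards [Ioo_mem_nhdsGT (lt_add_one a)] with z hz
    filter_upwards [hlt] with l hl
    have hlow : log (a - l) ≤ log (z - l) := log_le_log (by linarith) (by linarith [hz.1])
    have hup : log (z - l) ≤ log (a + 1 - l) :=
      log_le_log (by linarith [hz.1]) (by linarith [hz.2])
    rw [norm_eq_abs, abs_le]
    constructor <;> cases abs_cases (log (a - l)) <;> cases abs_cases (log (a + 1 - l)) <;> linarith
  · filter_upwards [hlt] with l hl
    exact ((continuous_id.sub continuous_const).continuousAt.log (by simp; linarith)).tendsto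
      |>.mono_left nhdsWithin_le_nhds

lemma integral_log_sub_mul [IsProbabilityMeasure μ] (hμ : ∀ᵐ l ∂μ, l ∈ Icc m a) {β γ : ℝ}
    (hβ : 0 < β) (hγ : β * a < γ) :
    ∫ l, log (γ - β * l) ∂μ = log β + logPotential μ (γ / β) := by
  have hz : a < γ / β := (lt_div_iff₀' hβ).2 hγ
  calc ∫ l, log (γ - β * l) ∂μ = ∫ l, (log β + log (γ / β - l)) ∂μ := by
        refine integral_congr_ae ?_
        filter_upwards [hμ] with l hl
        rw [← log_mul hβ.ne' (by linarith [hl.2]), mul_sub, mul_div_cancel₀ _ hβ.ne']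
    _ = log β + logPotential μ (γ / β) := by
        rw [integral_add (integrable_const _) (integrable_log_sub hμ hz), integral_const,
          probReal_univ, one_smul, logPotential]

end AeBounded

theorem statement16_general
    (μ : Measure ℝ) [IsProbabilityMeasure μ]
    (hcomp : ∃ K : Set ℝ, IsCompact K ∧ μ Kᶜ = 0)
    (hlog : Integrable (fun l => Real.log (suppMax μ - l)) μ)
    (σ β : ℝ) (hβ : 0 < β)
    (hcond : -(sStarE μ) < ((β * σ ^ 2 : ℝ) : EReal)) :
    sInf {y : ℝ | ∃ γ : ℝ, β * suppMax μ < γ ∧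
        y = γ * σ ^ 2 - ∫ l, Real.log (γ - β * l) ∂μ}
      = (β * suppMax μ * σ ^ 2 - Real.log β - ∫ l, Real.log (suppMax μ - l) ∂μ) ∧
    ∀ γ : ℝ, β * suppMax μ < γ →
      (γ * σ ^ 2 - ∫ l, Real.log (γ - β * l) ∂μ)
        ≠ (β * suppMax μ * σ ^ 2 - Real.log β - ∫ l, Real.log (suppMax μ - l) ∂μ) := by
  obtain ⟨m, hμ⟩ := exists_ae_mem_Icc_suppMax hcomp
  have hS : ∀ z, suppMax μ < z → -(β * σ ^ 2) < stieltjesT μ z :=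
    fun _ hz => lt_stieltjesT_of_neg_sStarE_lt hcond hz
  have hatom : μ {suppMax μ} = 0 :=
    measure_singleton_eq_zero_of_bddBelow_stieltjesT (hμ.mono fun _ hl => hl.2) fun z hz =>
      (hS z hz).le
  set φ : ℝ → ℝ := fun z => β * σ ^ 2 * z - logPotential μ z - log β
  have hmono : StrictMonoOn φ (Ioi (suppMax μ)) := fun _ hx _ hy hxy =>
    sub_lt_sub_right (strictMonoOn_mul_sub_logPotential hμ hS hx hy hxy) _
  have hlim : Tendsto φ (𝓝[>] (suppMax μ))
      (𝓝 (β * σ ^ 2 * suppMax μ - logPotential μ (suppMax μ) - log β)) :=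
    (((tendsto_id.mono_left nhdsWithin_le_nhds).const_mul _).sub
      (tendsto_logPotential_nhdsGT hμ hatom hlog)).sub_const _
  have hF : ∀ γ, β * suppMax μ < γ → γ * σ ^ 2 - ∫ l, log (γ - β * l) ∂μ = φ (γ / β) := by
    intro γ hγ
    have hscale : β * σ ^ 2 * (γ / β) = γ * σ ^ 2 := by field_simp
    simp only [φ, hscale, integral_log_sub_mul hμ hβ hγ]
    ring
  have hc : β * suppMax μ * σ ^ 2 - log β - ∫ l, log (suppMax μ - l) ∂μ
      = β * σ ^ 2 * suppMax μ - logPotential μ (suppMax μ) - log β := by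
    rw [logPotential]
    ring
  rw [setOf_exists_mul_lt_eq_image_Ioi hβ hF, hc]
  refine ⟨(isGLB_Ioi.isGLB_of_tendsto hmono.monotoneOn nonempty_Ioi hlim).csInf_eq
    (nonempty_Ioi.image _), fun γ hγ => ?_⟩
  rw [hF γ hγ]
  exact (hmono.lt_of_tendsto_nhdsGT hlim ((lt_div_iff₀' hβ).2 hγ)).ne'

/-- Let `μ` be a compactly supported probability measure on `ℝ` with
`λ_max = sup(supp μ)`. Assume `s_* = lim_{z↓λ_max} S_μ(z)` is finite and that
`∫ |log(λ_max − λ)| μ(dλ) < ∞`. Let `σ > 0` and `β > 0` satisfy `βσ² > −s_*`. Then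
`inf_{γ > βλ_max} [ γσ² − ∫ μ(dλ) log(γ − βλ) ] = β λ_max σ² − log β − ∫ μ(dλ) log(λ_max − λ)`,
and this infimum is not attained in `(βλ_max, ∞)`. -/
theorem statement16
    (μ : Measure ℝ) [IsProbabilityMeasure μ]
    (hcomp : ∃ K : Set ℝ, IsCompact K ∧ μ Kᶜ = 0)
    (hfin : sStarE μ ≠ ⊥)
    (hlog : Integrable (fun l => Real.log (suppMax μ - l)) μ)
    (σ β : ℝ) (hσ : 0 < σ) (hβ : 0 < β)
    (hcond : -(sStarE μ) < ((β * σ ^ 2 : ℝ) : EReal)) :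
    sInf {y : ℝ | ∃ γ : ℝ, β * suppMax μ < γ ∧
        y = γ * σ ^ 2 - ∫ l, Real.log (γ - β * l) ∂μ}
      = (β * suppMax μ * σ ^ 2 - Real.log β - ∫ l, Real.log (suppMax μ - l) ∂μ) ∧
    ∀ γ : ℝ, β * suppMax μ < γ →
      (γ * σ ^ 2 - ∫ l, Real.log (γ - β * l) ∂μ)
        ≠ (β * suppMax μ * σ ^ 2 - Real.log β - ∫ l, Real.log (suppMax μ - l) ∂μ) :=
  statement16_general μ hcomp hlog σ β hβ hcond
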